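/- Let (W_∗, F^∗) and (W'_∗, F'^∗) be ℝ-mixed Hodge structures on finite-dimensional real vector spaces V and V', and let f : V → V' be a real linear map with f(W_i) ⊆ W'_i for all i and f_ℂ(F^p) ⊆ F'^p for all p, where f_ℂ = f ⊗ id_ℂ. Let K = ker f, so that K_ℂ identifies with ker f_ℂ. Then the filtrations W_i(K) := W_i ∩ K and F^p(K_ℂ) := F^p ∩ ker f_ℂ form an ℝ-mixed Hodge structure on K. -/

import Mathlib

open TensorProduct

noncomputable section

namespace MHS

instance : RingHomSurjective (starRingEnd ℂ) :=
  ⟨fun x => ⟨star x, star_star x⟩⟩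

variable (V : Type*) [AddCommGroup V] [Module ℝ V]

/-- The inclusion `v ↦ 1 ⊗ v` of `V` into its complexification `ℂ ⊗[ℝ] V`. -/
def incl : V →ₗ[ℝ] ℂ ⊗[ℝ] V := TensorProduct.mk ℝ ℂ V 1

/-- Complex conjugation on the complexification `ℂ ⊗[ℝ] V`, as a
conjugate-linear (i.e. `starRingEnd ℂ`-semilinear) map. -/
def conjC : (ℂ ⊗[ℝ] V) →ₛₗ[starRingEnd ℂ] (ℂ ⊗[ℝ] V) where
  toFun := LinearMap.rTensor V (Complex.conjAe.toLinearMap : ℂ →ₗ[ℝ] ℂ)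
  map_add' := fun x y => map_add _ x y
  map_smul' := by
    intro c x
    induction x using TensorProduct.induction_on with
    | zero => simp
    | tmul a v =>
        simp only [TensorProduct.smul_tmul', LinearMap.rTensor_tmul, smul_eq_mul,
          AlgEquiv.toLinearMap_apply, map_mul, starRingEnd_apply]
        rfl
    | add x y hx hy =>
        simp only [smul_add, map_add]
        exact congrArg₂ (· + ·) hx hy

/-- The complexification `W ⊗ ℂ` of a real subspace `W ⊆ V`, as a complex
subspace of `ℂ ⊗[ℝ] V`. -/
def cx (W : Submodule ℝ V) : Submodule ℂ (ℂ ⊗[ℝ] V) :=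
  Submodule.span ℂ (incl V '' (W : Set V))

variable {V}

/-- `(W, F)` is an `ℝ`-mixed Hodge structure on `V`:  `W` is an increasing
exhaustive filtration of `V` by real subspaces, `F` a decreasing exhaustive
filtration of `ℂ ⊗[ℝ] V` by complex subspaces, and for every `n, p` the induced
filtration on `Gr^W_n = (W n ⊗ ℂ)/(W (n-1) ⊗ ℂ)` satisfies the weight `n`
Hodge decomposition conditions (expressed here at the level of preimages in
`W n ⊗ ℂ` of the relevant subspaces of the quotient). -/
structure IsRMHS (W : ℤ → Submodule ℝ V) (F : ℤ → Submodule ℂ (ℂ ⊗[ℝ] V)) : Prop where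
  monoW : Monotone W
  antiF : Antitone F
  w_bot : ∃ a : ℤ, ∀ i ≤ a, W i = ⊥
  w_top : ∃ b : ℤ, ∀ i, b ≤ i → W i = ⊤
  f_top : ∃ a : ℤ, ∀ p ≤ a, F p = ⊤
  f_bot : ∃ b : ℤ, ∀ p, b ≤ p → F p = ⊥
  gr_inf : ∀ n p : ℤ,
      ((F p ⊓ cx V (W n)) ⊔ cx V (W (n-1))) ⊓
        ((((F (n+1-p)).map (conjC V)) ⊓ cx V (W n)) ⊔ cx V (W (n-1)))
      = cx V (W (n-1))
  gr_sup : ∀ n p : ℤ,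
      (F p ⊓ cx V (W n)) ⊔ ((((F (n+1-p)).map (conjC V)) ⊓ cx V (W n)) ⊔ cx V (W (n-1)))
      = cx V (W n)

/-- The subspace `R^{p,q} = (W_{p+q} ⊗ ℂ) ∩ F^p`. -/
def Rpq (W : ℤ → Submodule ℝ V) (F : ℤ → Submodule ℂ (ℂ ⊗[ℝ] V)) (p q : ℤ) :
    Submodule ℂ (ℂ ⊗[ℝ] V) :=
  cx V (W (p + q)) ⊓ F p

/-- The subspace
`L^{p,q} = (W_{p+q} ⊗ ℂ) ∩ σ(F^q) + Σ_{i ≥ 2} (W_{p+q-i} ⊗ ℂ) ∩ σ(F^{q-i+1})`. -/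
def Lpq (W : ℤ → Submodule ℝ V) (F : ℤ → Submodule ℂ (ℂ ⊗[ℝ] V)) (p q : ℤ) :
    Submodule ℂ (ℂ ⊗[ℝ] V) :=
  (cx V (W (p + q)) ⊓ (F q).map (conjC V)) ⊔
    ⨆ i : ℤ, ⨆ _ : 2 ≤ i, (cx V (W (p + q - i)) ⊓ (F (q - i + 1)).map (conjC V))

/-- The Deligne subspace `I^{p,q} = R^{p,q} ∩ L^{p,q}`. -/
def Ipq (W : ℤ → Submodule ℝ V) (F : ℤ → Submodule ℂ (ℂ ⊗[ℝ] V)) (p q : ℤ) :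
    Submodule ℂ (ℂ ⊗[ℝ] V) :=
  Rpq W F p q ⊓ Lpq W F p q

end MHS

/-!
The proof goes through Deligne's splitting. The subspaces `I^{p,q} = R^{p,q} ∩ L^{p,q}` satisfy
`F^r ∩ W_n ⊗ ℂ = ⊕_{r ≤ a, a + b ≤ n} I^{a,b}`, and the sum of all of them is direct. A
morphism `f` maps `I^{p,q}` into `I'^{p,q}`, so by uniqueness of the decomposition in `V'` every
Deligne component of an element of `ker f_ℂ` lies in `ker f_ℂ`. Sorting the components of
`x ∈ W_n ⊗ ℂ ∩ ker f_ℂ` by type gives the Hodge decomposition of `Gr^W_n` of the kernel: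
components with `a ≥ p` lie in `F^p`, those of lower weight in `W_{n-1}`, and the remaining ones
in `F̄^{n+1-p} + W_{n-1}`, where the same argument for the conjugate structure keeps both summands
in the kernel. The intersection condition on `Gr^W_n` of the kernel is inherited from `V`.
-/

namespace MHS

def re (V : Type*) [AddCommGroup V] [Module ℝ V] : ℂ ⊗[ℝ] V →ₗ[ℝ] V :=
  TensorProduct.lift ((LinearMap.lsmul ℝ V).comp Complex.reLm)

def im (V : Type*) [AddCommGroup V] [Module ℝ V] : ℂ ⊗[ℝ] V →ₗ[ℝ] V :=
  TensorProduct.lift ((LinearMap.lsmul ℝ V).comp Complex.imLm)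

section Complexification

variable {V V₂ : Type*} [AddCommGroup V] [Module ℝ V] [AddCommGroup V₂] [Module ℝ V₂]

@[simp] lemma re_tmul (c : ℂ) (v : V) : re V (c ⊗ₜ v) = c.re • v := rfl

@[simp] lemma im_tmul (c : ℂ) (v : V) : im V (c ⊗ₜ v) = c.im • v := rfl

lemma one_tmul_re_add_I_tmul_im (x : ℂ ⊗[ℝ] V) :
    (1 : ℂ) ⊗ₜ[ℝ] re V x + Complex.I ⊗ₜ[ℝ] im V x = x := by
  induction x using TensorProduct.induction_on with
  | zero => simp
  | tmul c v =>
    rw [re_tmul, im_tmul, ← smul_tmul, ← smul_tmul, ← add_tmul]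
    congr 1
    simp [Complex.real_smul]
  | add x y hx hy => rw [map_add, map_add, tmul_add, tmul_add, add_add_add_comm, hx, hy]

lemma eq_zero_iff_re_im {x : ℂ ⊗[ℝ] V} : x = 0 ↔ re V x = 0 ∧ im V x = 0 :=
  ⟨by rintro rfl; simp, fun ⟨hre, him⟩ => by rw [← one_tmul_re_add_I_tmul_im x, hre, him]; simp⟩

lemma re_smul (c : ℂ) (x : ℂ ⊗[ℝ] V) : re V (c • x) = c.re • re V x - c.im • im V x := by
  induction x using TensorProduct.induction_on with
  | zero => simp
  | tmul a v => simp [smul_tmul', Complex.mul_re, sub_smul, mul_smul]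
  | add x y hx hy => rw [smul_add, map_add, hx, hy, map_add, map_add]; module

lemma im_smul (c : ℂ) (x : ℂ ⊗[ℝ] V) : im V (c • x) = c.im • re V x + c.re • im V x := by
  induction x using TensorProduct.induction_on with
  | zero => simp
  | tmul a v => simp [smul_tmul', Complex.mul_im, add_smul, mul_smul, add_comm]
  | add x y hx hy => rw [smul_add, map_add, hx, hy, map_add, map_add]; module

lemma mem_cx_iff {A : Submodule ℝ V} {x : ℂ ⊗[ℝ] V} :
    x ∈ cx V A ↔ re V x ∈ A ∧ im V x ∈ A := by
  constructor
  · intro hx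
    induction hx using Submodule.span_induction with
    | mem y hy =>
      obtain ⟨v, hv, rfl⟩ := hy
      simpa [incl] using hv
    | zero => simp
    | add y z _ _ hy hz => simpa using ⟨A.add_mem hy.1 hz.1, A.add_mem hy.2 hz.2⟩
    | smul c y _ hy =>
      rw [re_smul, im_smul]
      exact ⟨A.sub_mem (A.smul_mem _ hy.1) (A.smul_mem _ hy.2),
        A.add_mem (A.smul_mem _ hy.1) (A.smul_mem _ hy.2)⟩
  · rintro ⟨hre, him⟩
    have hmem : ∀ v ∈ A, (1 : ℂ) ⊗ₜ[ℝ] v ∈ cx V A := fun v hv =>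
      Submodule.subset_span ⟨v, hv, rfl⟩
    rw [← one_tmul_re_add_I_tmul_im x, ← mul_one Complex.I, ← smul_eq_mul, ← smul_tmul']
    exact (cx V A).add_mem (hmem _ hre) ((cx V A).smul_mem _ (hmem _ him))

lemma cx_mono {A B : Submodule ℝ V} (hAB : A ≤ B) : cx V A ≤ cx V B := fun _ hx => by
  rw [mem_cx_iff] at hx ⊢
  exact ⟨hAB hx.1, hAB hx.2⟩

lemma cx_inf (A B : Submodule ℝ V) : cx V (A ⊓ B) = cx V A ⊓ cx V B := by
  ext x
  simp only [mem_cx_iff, Submodule.mem_inf]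
  tauto

@[simp] lemma cx_bot : cx V (⊥ : Submodule ℝ V) = ⊥ := by
  ext x
  simp only [mem_cx_iff, Submodule.mem_bot, eq_zero_iff_re_im]

@[simp] lemma cx_top : cx V (⊤ : Submodule ℝ V) = ⊤ := by
  ext x
  simp [mem_cx_iff]

@[simp] lemma conjC_tmul (c : ℂ) (v : V) : conjC V (c ⊗ₜ[ℝ] v) = starRingEnd ℂ c ⊗ₜ[ℝ] v := rfl

@[simp] lemma conjC_conjC (x : ℂ ⊗[ℝ] V) : conjC V (conjC V x) = x := by
  induction x using TensorProduct.induction_on with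
  | zero => simp
  | tmul c v => simp
  | add x y hx hy => simp only [map_add, hx, hy]

lemma re_conjC (x : ℂ ⊗[ℝ] V) : re V (conjC V x) = re V x := by
  induction x using TensorProduct.induction_on with
  | zero => simp
  | tmul c v => simp
  | add x y hx hy => simp only [map_add, hx, hy]

lemma im_conjC (x : ℂ ⊗[ℝ] V) : im V (conjC V x) = -im V x := by
  induction x using TensorProduct.induction_on with
  | zero => simp
  | tmul c v => simp
  | add x y hx hy => simp only [map_add, hx, hy, neg_add]

lemma mem_map_conjC {S : Submodule ℂ (ℂ ⊗[ℝ] V)} {x : ℂ ⊗[ℝ] V} :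
    x ∈ S.map (conjC V) ↔ conjC V x ∈ S :=
  ⟨by rintro ⟨y, hy, rfl⟩; rwa [conjC_conjC], fun hx => ⟨conjC V x, hx, conjC_conjC x⟩⟩

lemma map_conjC_inf (S T : Submodule ℂ (ℂ ⊗[ℝ] V)) :
    (S ⊓ T).map (conjC V) = S.map (conjC V) ⊓ T.map (conjC V) := by
  ext x
  simp only [mem_map_conjC, Submodule.mem_inf]

@[simp] lemma map_conjC_map_conjC (S : Submodule ℂ (ℂ ⊗[ℝ] V)) :
    (S.map (conjC V)).map (conjC V) = S := by
  ext x
  simp only [mem_map_conjC, conjC_conjC]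

@[simp] lemma map_conjC_top : (⊤ : Submodule ℂ (ℂ ⊗[ℝ] V)).map (conjC V) = ⊤ := by
  ext x
  simp only [mem_map_conjC, Submodule.mem_top]

@[simp] lemma map_conjC_cx (A : Submodule ℝ V) : (cx V A).map (conjC V) = cx V A := by
  ext x
  simp only [mem_map_conjC, mem_cx_iff, re_conjC, im_conjC, neg_mem_iff]

lemma re_baseChange (g : V →ₗ[ℝ] V₂) (x : ℂ ⊗[ℝ] V) :
    re V₂ (g.baseChange ℂ x) = g (re V x) := by
  induction x using TensorProduct.induction_on with
  | zero => simp
  | tmul c v => simp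
  | add x y hx hy => simp only [map_add, hx, hy]

lemma im_baseChange (g : V →ₗ[ℝ] V₂) (x : ℂ ⊗[ℝ] V) :
    im V₂ (g.baseChange ℂ x) = g (im V x) := by
  induction x using TensorProduct.induction_on with
  | zero => simp
  | tmul c v => simp
  | add x y hx hy => simp only [map_add, hx, hy]

lemma baseChange_conjC (g : V →ₗ[ℝ] V₂) (x : ℂ ⊗[ℝ] V) :
    g.baseChange ℂ (conjC V x) = conjC V₂ (g.baseChange ℂ x) := by
  induction x using TensorProduct.induction_on with
  | zero => simp
  | tmul c v => simp
  | add x y hx hy => simp only [map_add, hx, hy]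

lemma map_baseChange_map_conjC (g : V →ₗ[ℝ] V₂) (S : Submodule ℂ (ℂ ⊗[ℝ] V)) :
    (S.map (conjC V)).map (g.baseChange ℂ) = (S.map (g.baseChange ℂ)).map (conjC V₂) := by
  ext x
  constructor
  · rintro ⟨y, hy, rfl⟩
    exact mem_map_conjC.2 ⟨conjC V y, mem_map_conjC.1 hy, baseChange_conjC g y⟩
  · intro hx
    obtain ⟨z, hz, hzx⟩ := mem_map_conjC.1 hx
    exact ⟨conjC V z, mem_map_conjC.2 (by rwa [conjC_conjC]),
      by rw [baseChange_conjC, hzx, conjC_conjC]⟩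

lemma map_conjC_comap_baseChange (g : V →ₗ[ℝ] V₂) (S : Submodule ℂ (ℂ ⊗[ℝ] V₂)) :
    (S.comap (g.baseChange ℂ)).map (conjC V) = (S.map (conjC V₂)).comap (g.baseChange ℂ) := by
  ext x
  simp only [mem_map_conjC, Submodule.mem_comap, baseChange_conjC]

lemma map_baseChange_cx (g : V →ₗ[ℝ] V₂) (A : Submodule ℝ V) :
    (cx V A).map (g.baseChange ℂ) = cx V₂ (A.map g) := by
  ext x
  simp only [Submodule.mem_map, mem_cx_iff]
  constructor
  · rintro ⟨y, ⟨hre, him⟩, rfl⟩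
    rw [re_baseChange, im_baseChange]
    exact ⟨⟨_, hre, rfl⟩, ⟨_, him, rfl⟩⟩
  · rintro ⟨⟨a, ha, hax⟩, ⟨b, hb, hbx⟩⟩
    refine ⟨(1 : ℂ) ⊗ₜ[ℝ] a + Complex.I ⊗ₜ[ℝ] b, ⟨by simpa using ha, by simpa using hb⟩, ?_⟩
    rw [map_add, LinearMap.baseChange_tmul, LinearMap.baseChange_tmul, hax, hbx,
      one_tmul_re_add_I_tmul_im]

lemma ker_baseChange (g : V →ₗ[ℝ] V₂) :
    LinearMap.ker (g.baseChange ℂ) = cx V (LinearMap.ker g) := by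
  ext x
  simp only [LinearMap.mem_ker, mem_cx_iff, eq_zero_iff_re_im, re_baseChange, im_baseChange]

lemma baseChange_injective {g : V →ₗ[ℝ] V₂} (hg : Function.Injective g) :
    Function.Injective (g.baseChange ℂ) := by
  rw [← LinearMap.ker_eq_bot] at hg ⊢
  rw [ker_baseChange, hg, cx_bot]

end Complexification

section Deligne

variable {V : Type*} [AddCommGroup V] [Module ℝ V]
variable {W : ℤ → Submodule ℝ V} {F : ℤ → Submodule ℂ (ℂ ⊗[ℝ] V)}

variable (W F) in
def supIpq (P : ℤ × ℤ → Prop) : Submodule ℂ (ℂ ⊗[ℝ] V) :=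
  ⨆ ab : ℤ × ℤ, ⨆ _ : P ab, Ipq W F ab.1 ab.2

lemma Ipq_le_supIpq {P : ℤ × ℤ → Prop} {ab : ℤ × ℤ} (hab : P ab) :
    Ipq W F ab.1 ab.2 ≤ supIpq W F P :=
  le_iSup₂_of_le ab hab le_rfl

lemma supIpq_le {P : ℤ × ℤ → Prop} {T : Submodule ℂ (ℂ ⊗[ℝ] V)}
    (hT : ∀ ab, P ab → Ipq W F ab.1 ab.2 ≤ T) : supIpq W F P ≤ T :=
  iSup₂_le hT

lemma supIpq_mono {P Q : ℤ × ℤ → Prop} (hPQ : ∀ ab, P ab → Q ab) :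
    supIpq W F P ≤ supIpq W F Q :=
  supIpq_le fun _ hab => Ipq_le_supIpq (hPQ _ hab)

lemma supIpq_or (P Q : ℤ × ℤ → Prop) :
    supIpq W F (fun ab => P ab ∨ Q ab) = supIpq W F P ⊔ supIpq W F Q := by
  simp only [supIpq, iSup_or, iSup_sup_eq]

lemma exists_finsupp_of_mem_supIpq {P : ℤ × ℤ → Prop} {x : ℂ ⊗[ℝ] V}
    (hx : x ∈ supIpq W F P) :
    ∃ l : (ℤ × ℤ) →₀ (ℂ ⊗[ℝ] V), (∀ ab, l ab ∈ Ipq W F ab.1 ab.2) ∧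
      (∀ ab, ¬ P ab → l ab = 0) ∧ (l.sum fun _ y => y) = x := by
  rw [supIpq, Submodule.mem_iSup_iff_exists_finsupp] at hx
  obtain ⟨l, hl, hsum⟩ := hx
  refine ⟨l, fun ab => (iSup_le fun _ => le_rfl : (⨆ _ : P ab, Ipq W F ab.1 ab.2) ≤ _) (hl ab),
    fun ab hab => ?_, hsum⟩
  simpa [hab] using hl ab

namespace IsRMHS

variable (h : IsRMHS W F)
include h

lemma weight_induction {P : ℤ → Prop} (bot : ∀ n, W n = ⊥ → P n)
    (succ : ∀ n, P n → P (n + 1)) (n : ℤ) : P n := by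
  obtain ⟨a, ha⟩ := h.w_bot
  rcases le_or_gt n a with hn | hn
  · exact bot n (ha n hn)
  · exact Int.leInduction (motive := fun n _ => P n) (bot a (ha a le_rfl))
      (fun k _ => succ k) n hn.le

lemma Ipq_le_cx {a b n : ℤ} (hn : a + b ≤ n) : Ipq W F a b ≤ cx V (W n) :=
  inf_le_left.trans (inf_le_left.trans (cx_mono (h.monoW hn)))

lemma Ipq_le_F_inf_cx {a b r n : ℤ} (hr : r ≤ a) (hn : a + b ≤ n) :
    Ipq W F a b ≤ F r ⊓ cx V (W n) :=
  le_inf (inf_le_left.trans (inf_le_right.trans (h.antiF hr))) (h.Ipq_le_cx hn)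

lemma Ipq_inf_cx_le {K : Submodule ℝ V} {a b m : ℤ} (hm : a + b ≤ m) :
    Ipq W F a b ⊓ cx V K ≤ cx V (K ⊓ W m) := by
  rw [cx_inf]
  exact le_inf inf_le_right (inf_le_left.trans (h.Ipq_le_cx hm))

lemma Lpq_le {p q m : ℤ} (hm : m < p + q) :
    Lpq W F p q ≤ (cx V (W (p + q)) ⊓ (F (m + 1 - p)).map (conjC V)) ⊔ cx V (W (m - 1)) := by
  refine sup_le (le_sup_of_le_left (inf_le_inf_left _ (Submodule.map_mono (h.antiF (by omega)))))
    (iSup₂_le fun i hi => ?_)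
  rcases le_or_gt (p + q - i) (m - 1) with hlow | hhigh
  · exact le_sup_of_le_right (inf_le_left.trans (cx_mono (h.monoW hlow)))
  · exact le_sup_of_le_left (inf_le_inf (cx_mono (h.monoW (by omega)))
      (Submodule.map_mono (h.antiF (by omega))))

lemma Ipq_le_conjF_sup {a b r : ℤ} (hr : r ≤ b) :
    Ipq W F a b ≤ ((F r).map (conjC V) ⊓ cx V (W (a + b))) ⊔ cx V (W (a + b - 1)) := by
  refine inf_le_right.trans ((h.Lpq_le (m := a + b - 1) (by omega)).trans (sup_le ?_ ?_))
  · exact le_sup_of_le_left (le_inf (inf_le_right.trans (Submodule.map_mono (h.antiF (by omega))))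
      inf_le_left)
  · exact le_sup_of_le_right (cx_mono (h.monoW (by omega)))

lemma Ipq_inf_cx_eq_bot (p q : ℤ) : Ipq W F p q ⊓ cx V (W (p + q - 1)) = ⊥ := by
  -- On `W_m`, `m < p + q`, the `L^{p,q}`-condition puts `x` in `F̄^{m+1-p} + W_{m-1}`, and
  -- `x ∈ F^p`, so `gr_inf` in weight `m` pushes `x` down to `W_{m-1}`.
  have hdown : ∀ m ≤ p + q - 1, Ipq W F p q ⊓ cx V (W (p + q - 1)) ≤ cx V (W m) := by
    refine Int.leInductionDown inf_le_right fun m hm ih x hx => ?_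
    have hxm : x ∈ cx V (W m) := ih hx
    have hxL : x ∈ ((F (m + 1 - p)).map (conjC V) ⊓ cx V (W m)) ⊔ cx V (W (m - 1)) := by
      have hxmL : x ∈ cx V (W m) ⊓ ((cx V (W (p + q)) ⊓ (F (m + 1 - p)).map (conjC V)) ⊔
          cx V (W (m - 1))) := ⟨hxm, h.Lpq_le (by omega) hx.1.2⟩
      exact ((inf_sup_le_assoc_of_le _ (cx_mono (h.monoW (by omega)))).trans
        (sup_le_sup_right (le_inf (inf_le_right.trans inf_le_right) inf_le_left) _)) hxmL
    rw [← h.gr_inf m p]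
    exact ⟨Submodule.mem_sup_left ⟨hx.1.1.2, hxm⟩, hxL⟩
  obtain ⟨a, ha⟩ := h.w_bot
  rw [eq_bot_iff, ← cx_bot, ← ha (min a (p + q - 1)) (min_le_left _ _)]
  exact hdown _ (min_le_right _ _)

lemma gr_inf_of_add_eq {n p q : ℤ} (hpq : p + q = n + 1) :
    ((F p ⊓ cx V (W n)) ⊔ cx V (W (n - 1))) ⊓
      (((F q).map (conjC V) ⊓ cx V (W n)) ⊔ cx V (W (n - 1))) = cx V (W (n - 1)) := by
  obtain rfl : q = n + 1 - p := by omega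
  exact h.gr_inf n p

lemma cx_inf_conjF_le_Lpq {p q m r : ℤ} (hm : m ≤ p + q) (hr : m + 1 - p ≤ r) :
    cx V (W m) ⊓ (F r).map (conjC V) ≤ Lpq W F p q := by
  rcases le_or_gt (p + q - 1) m with hhigh | hlow
  · exact le_sup_of_le_left (inf_le_inf (cx_mono (h.monoW hm))
      (Submodule.map_mono (h.antiF (by omega))))
  · refine le_sup_of_le_right (le_iSup₂_of_le (p + q - m) (by omega) ?_)
    rw [sub_sub_cancel]
    exact inf_le_inf_left _ (Submodule.map_mono (h.antiF (by omega)))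

lemma Ipq_le_Lpq_of_lt {a b p q : ℤ} (hab : a + b < p + q) (hap : a < p) :
    Ipq W F a b ≤ Lpq W F p q :=
  inf_le_right.trans (sup_le (h.cx_inf_conjF_le_Lpq hab.le (by omega))
    (iSup₂_le fun k hk => h.cx_inf_conjF_le_Lpq (by omega) (by omega)))

/-- The inductive step of Deligne's splitting; `hD` is the splitting in weight `n - 1`. -/
lemma F_inf_cx_inf_le_Ipq_sup {p q n : ℤ} (hn : p + q = n)
    (hD : cx V (W (n - 1)) = supIpq W F (fun ab => ab.1 + ab.2 ≤ n - 1)) :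
    F p ⊓ cx V (W n) ⊓ (((F q).map (conjC V) ⊓ cx V (W n)) ⊔ cx V (W (n - 1))) ≤
      Ipq W F p q ⊔ (F p ⊓ cx V (W (n - 1))) := by
  subst hn
  set R := F p ⊓ cx V (W (p + q - 1))
  have hlow : cx V (W (p + q - 1)) ≤ R ⊔ Lpq W F p q := by
    rw [hD]
    refine supIpq_le fun ab hab => ?_
    rcases le_or_gt p ab.1 with hap | hap
    · exact le_sup_of_le_left (h.Ipq_le_F_inf_cx hap hab)
    · exact le_sup_of_le_right (h.Ipq_le_Lpq_of_lt (by omega) hap)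
  have hconj : (F q).map (conjC V) ⊓ cx V (W (p + q)) ≤ Lpq W F p q :=
    le_sup_of_le_left (le_of_eq (inf_comm _ _))
  calc F p ⊓ cx V (W (p + q)) ⊓ (((F q).map (conjC V) ⊓ cx V (W (p + q))) ⊔ cx V (W (p + q - 1)))
      ≤ F p ⊓ cx V (W (p + q)) ⊓ (R ⊔ Lpq W F p q) :=
        inf_le_inf_left _ (sup_le (hconj.trans le_sup_right) hlow)
    _ ≤ R ⊔ Lpq W F p q ⊓ (F p ⊓ cx V (W (p + q))) := by
        rw [inf_comm, sup_inf_assoc_of_le _ (inf_le_inf_left _ (cx_mono (h.monoW (by omega))))]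
    _ ≤ Ipq W F p q ⊔ R :=
        sup_le le_sup_right (le_sup_of_le_left (le_inf
          (le_inf (inf_le_right.trans inf_le_right) (inf_le_right.trans inf_le_left)) inf_le_left))

lemma F_inf_cx_le_supIpq_sup {n : ℤ}
    (hD : cx V (W (n - 1)) = supIpq W F (fun ab => ab.1 + ab.2 ≤ n - 1)) (p : ℤ) :
    F p ⊓ cx V (W n) ≤
      supIpq W F (fun ab => p ≤ ab.1 ∧ ab.1 + ab.2 = n) ⊔ (F p ⊓ cx V (W (n - 1))) := by
  obtain ⟨b, hb⟩ := h.f_bot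
  rcases le_or_gt b p with hp | hp
  · simp [hb p hp]
  refine Int.leInductionDown (m := b) (motive := fun p _ => F p ⊓ cx V (W n) ≤
      supIpq W F (fun ab => p ≤ ab.1 ∧ ab.1 + ab.2 = n) ⊔ (F p ⊓ cx V (W (n - 1))))
    (by simp [hb b le_rfl]) (fun p _ ih x hx => ?_) p hp.le
  obtain ⟨u, hu, y, hy, rfl⟩ := Submodule.mem_sup.1 ((h.gr_sup n p).ge hx.2)
  have hyF : y ∈ F (p - 1) ⊓ cx V (W n) := by
    simpa using sub_mem hx (inf_le_inf_right _ (h.antiF (show p - 1 ≤ p by omega)) hu)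
  have hyI := h.F_inf_cx_inf_le_Ipq_sup (p := p - 1) (q := n + 1 - p) (by ring) hD ⟨hyF, hy⟩
  refine add_mem ?_ ((sup_le_sup_right (Ipq_le_supIpq (ab := (p - 1, n + 1 - p))
    ⟨le_rfl, by ring⟩) _) hyI)
  exact (sup_le_sup (supIpq_mono fun ab hab => ⟨by omega, hab.2⟩)
    (inf_le_inf_right _ (h.antiF (by omega)))) (ih hu)

lemma cx_eq_supIpq_of_F_inf_cx_eq {n : ℤ}
    (hn : ∀ r, F r ⊓ cx V (W n) = supIpq W F (fun ab => r ≤ ab.1 ∧ ab.1 + ab.2 ≤ n)) :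
    cx V (W n) = supIpq W F (fun ab => ab.1 + ab.2 ≤ n) := by
  obtain ⟨a, ha⟩ := h.f_top
  refine le_antisymm ?_ (supIpq_le fun _ hab => h.Ipq_le_cx hab)
  calc cx V (W n) = F a ⊓ cx V (W n) := by rw [ha a le_rfl, top_inf_eq]
    _ = _ := hn a
    _ ≤ _ := supIpq_mono fun _ hab => hab.2

lemma F_inf_cx_eq_supIpq (n r : ℤ) :
    F r ⊓ cx V (W n) = supIpq W F (fun ab => r ≤ ab.1 ∧ ab.1 + ab.2 ≤ n) := by
  have hge : ∀ n r, supIpq W F (fun ab => r ≤ ab.1 ∧ ab.1 + ab.2 ≤ n) ≤ F r ⊓ cx V (W n) :=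
    fun _ _ => supIpq_le fun _ hab => h.Ipq_le_F_inf_cx hab.1 hab.2
  revert r
  refine h.weight_induction (fun n hn r => le_antisymm (by simp [hn]) (hge n r))
    (fun n ih r => le_antisymm ?_ (hge (n + 1) r)) n
  have hD := h.cx_eq_supIpq_of_F_inf_cx_eq ih
  rw [← add_sub_cancel_right n 1] at hD
  refine (h.F_inf_cx_le_supIpq_sup hD r).trans
    (sup_le (supIpq_mono fun _ hab => ⟨hab.1, hab.2.le⟩) ?_)
  rw [add_sub_cancel_right, ih r]
  exact supIpq_mono fun _ hab => ⟨hab.1, by omega⟩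

lemma cx_eq_supIpq (n : ℤ) : cx V (W n) = supIpq W F (fun ab => ab.1 + ab.2 ≤ n) :=
  h.cx_eq_supIpq_of_F_inf_cx_eq (h.F_inf_cx_eq_supIpq n)

lemma disjoint_Ipq (p q : ℤ) :
    Disjoint (Ipq W F p q)
      (supIpq W F (fun ab => ab.1 + ab.2 = p + q ∧ ab ≠ (p, q)) ⊔ cx V (W (p + q - 1))) := by
  rw [disjoint_iff, ← h.Ipq_inf_cx_eq_bot p q]
  refine le_antisymm (le_inf inf_le_left ?_) (inf_le_inf_left _ le_sup_right)
  rintro x ⟨hxI, hx⟩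
  have hothers : supIpq W F (fun ab => ab.1 + ab.2 = p + q ∧ ab ≠ (p, q)) ≤
      (F (p + 1) ⊓ cx V (W (p + q))) ⊔
        (((F (q + 1)).map (conjC V) ⊓ cx V (W (p + q))) ⊔ cx V (W (p + q - 1))) := by
    refine supIpq_le fun ab ⟨hw, hne⟩ => ?_
    rcases le_or_gt (p + 1) ab.1 with ha | ha
    · exact le_sup_of_le_left (h.Ipq_le_F_inf_cx ha hw.le)
    · have hap : ab.1 ≠ p := fun hap => hne (Prod.ext hap (by omega))
      have := h.Ipq_le_conjF_sup (a := ab.1) (b := ab.2) (r := q + 1) (by omega)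
      rw [hw] at this
      exact le_sup_of_le_right this
  -- Write `x = u + y` with `u ∈ F^{p+1}` and `y ∈ F̄^{q+1} + W_{p+q-1}`; `gr_inf` applied to
  -- `u` (against `F̄^q`) and then to `y` (against `F^p`) shows both have lower weight.
  obtain ⟨u, hu, y, hy, rfl⟩ :=
    Submodule.mem_sup.1 ((sup_le hothers (le_sup_of_le_right le_sup_right)) hx)
  have hyσ : y ∈ ((F q).map (conjC V) ⊓ cx V (W (p + q))) ⊔ cx V (W (p + q - 1)) :=
    sup_le_sup_right (inf_le_inf_right _ (Submodule.map_mono (h.antiF (by omega)))) _ hy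
  have huW : u ∈ cx V (W (p + q - 1)) := by
    rw [← h.gr_inf_of_add_eq (p := p + 1) (q := q) (by ring)]
    exact ⟨Submodule.mem_sup_left hu,
      by simpa using sub_mem (h.Ipq_le_conjF_sup le_rfl hxI) hyσ⟩
  have hyW : y ∈ cx V (W (p + q - 1)) := by
    rw [← h.gr_inf_of_add_eq (p := p) (q := q + 1) (by ring)]
    refine ⟨?_, hy⟩
    simpa using sub_mem (Submodule.mem_sup_left (h.Ipq_le_F_inf_cx le_rfl le_rfl hxI))
      (Submodule.mem_sup_right huW : u ∈ (F p ⊓ cx V (W (p + q))) ⊔ cx V (W (p + q - 1)))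
  exact add_mem huW hyW

lemma eq_zero_of_sum_eq_zero (l : (ℤ × ℤ) →₀ (ℂ ⊗[ℝ] V))
    (hl : ∀ ab, l ab ∈ Ipq W F ab.1 ab.2) (hsum : (l.sum fun _ y => y) = 0) : l = 0 := by
  suffices ∀ n, ∀ l : (ℤ × ℤ) →₀ (ℂ ⊗[ℝ] V), (∀ ab, l ab ∈ Ipq W F ab.1 ab.2) →
      (∀ ab ∈ l.support, ab.1 + ab.2 ≤ n) → (l.sum fun _ y => y) = 0 → l = 0 by
    obtain ⟨n, hn⟩ := (l.support.image fun ab => ab.1 + ab.2).bddAbove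
    exact this n l hl (fun ab hab => hn (Finset.mem_image_of_mem _ hab)) hsum
  refine h.weight_induction (fun n hn l hl hsupp _ => ?_) (fun n ih l hl hsupp hsum => ?_)
  · ext ab
    by_cases hab : ab ∈ l.support
    · simpa [hn] using h.Ipq_le_cx (hsupp ab hab) (hl ab)
    · simpa using hab
  have htop : ∀ pq ∈ l.support, pq.1 + pq.2 = n + 1 → l pq = 0 := by
    intro pq hpq hw
    have hmem : l pq ∈ supIpq W F (fun ab => ab.1 + ab.2 = pq.1 + pq.2 ∧ ab ≠ (pq.1, pq.2)) ⊔
        cx V (W (pq.1 + pq.2 - 1)) := by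
      have hrest : l pq + ∑ ab ∈ l.support.erase pq, l ab = 0 :=
        (Finset.add_sum_erase _ _ hpq).trans hsum
      rw [eq_neg_of_add_eq_zero_left hrest]
      refine neg_mem (Submodule.sum_mem _ fun ab hab => ?_)
      rcases eq_or_ne (ab.1 + ab.2) (n + 1) with hab' | hab'
      · exact Submodule.mem_sup_left
          (Ipq_le_supIpq ⟨by omega, Finset.ne_of_mem_erase hab⟩ (hl ab))
      · refine Submodule.mem_sup_right (h.Ipq_le_cx ?_ (hl ab))
        have := hsupp ab (Finset.mem_of_mem_erase hab)
        omega
    exact Submodule.disjoint_def.1 (h.disjoint_Ipq pq.1 pq.2) _ (hl pq) hmem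
  refine ih l hl (fun ab hab => ?_) hsum
  have := hsupp ab hab
  by_contra hlt
  exact Finsupp.mem_support_iff.1 hab (htop ab hab (by omega))

end IsRMHS

end Deligne

section Morphisms

variable {V V₂ : Type*} [AddCommGroup V] [Module ℝ V] [AddCommGroup V₂] [Module ℝ V₂]
variable {W : ℤ → Submodule ℝ V} {F : ℤ → Submodule ℂ (ℂ ⊗[ℝ] V)}
variable {W₂ : ℤ → Submodule ℝ V₂} {F₂ : ℤ → Submodule ℂ (ℂ ⊗[ℝ] V₂)}

lemma IsRMHS.conj (h : IsRMHS W F) : IsRMHS W (fun p => (F p).map (conjC V)) where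
  monoW := h.monoW
  antiF := fun _ _ hpq => Submodule.map_mono (h.antiF hpq)
  w_bot := h.w_bot
  w_top := h.w_top
  f_top := by
    obtain ⟨a, ha⟩ := h.f_top
    exact ⟨a, fun p hp => by rw [ha p hp, map_conjC_top]⟩
  f_bot := by
    obtain ⟨b, hb⟩ := h.f_bot
    exact ⟨b, fun p hp => by rw [hb p hp, Submodule.map_bot]⟩
  gr_inf n p := by
    rw [map_conjC_map_conjC, inf_comm]
    exact h.gr_inf_of_add_eq (by ring)
  gr_sup n p := by
    rw [map_conjC_map_conjC, sup_left_comm]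
    have hq := h.gr_sup n (n + 1 - p)
    rwa [sub_sub_cancel] at hq

variable (W F W₂ F₂) in
structure IsMorphism (f : V →ₗ[ℝ] V₂) : Prop where
  map_W_le : ∀ i, (W i).map f ≤ W₂ i
  map_F_le : ∀ p, (F p).map (f.baseChange ℂ) ≤ F₂ p

namespace IsMorphism

variable {f : V →ₗ[ℝ] V₂} (hf : IsMorphism W F W₂ F₂ f)
include hf

lemma conj : IsMorphism W (fun p => (F p).map (conjC V)) W₂ (fun p => (F₂ p).map (conjC V₂)) f where
  map_W_le := hf.map_W_le
  map_F_le p := by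
    rw [map_baseChange_map_conjC]
    exact Submodule.map_mono (hf.map_F_le p)

lemma map_cx_le (i : ℤ) : (cx V (W i)).map (f.baseChange ℂ) ≤ cx V₂ (W₂ i) := by
  rw [map_baseChange_cx]
  exact cx_mono (hf.map_W_le i)

lemma map_Ipq_le (p q : ℤ) : (Ipq W F p q).map (f.baseChange ℂ) ≤ Ipq W₂ F₂ p q := by
  have hpiece : ∀ i r, (cx V (W i) ⊓ (F r).map (conjC V)).map (f.baseChange ℂ) ≤
      cx V₂ (W₂ i) ⊓ (F₂ r).map (conjC V₂) := fun i r =>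
    (Submodule.map_inf_le _).trans (inf_le_inf (hf.map_cx_le i) (hf.conj.map_F_le r))
  refine (Submodule.map_inf_le _).trans (inf_le_inf ?_ ?_)
  · exact (Submodule.map_inf_le _).trans (inf_le_inf (hf.map_cx_le _) (hf.map_F_le p))
  · simp only [Lpq, Submodule.map_sup, Submodule.map_iSup]
    exact sup_le_sup (hpiece _ _) (iSup₂_mono fun i _ => hpiece _ _)

lemma exists_finsupp_Ipq_ker (h₂ : IsRMHS W₂ F₂) {P : ℤ × ℤ → Prop} {x : ℂ ⊗[ℝ] V}
    (hx : x ∈ supIpq W F P) (hxf : x ∈ cx V (LinearMap.ker f)) :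
    ∃ l : (ℤ × ℤ) →₀ (ℂ ⊗[ℝ] V), (∀ ab, l ab ∈ Ipq W F ab.1 ab.2 ⊓ cx V (LinearMap.ker f)) ∧
      (∀ ab, ¬ P ab → l ab = 0) ∧ (l.sum fun _ y => y) = x := by
  obtain ⟨l, hlI, hlP, hlsum⟩ := exists_finsupp_of_mem_supIpq hx
  rw [← ker_baseChange, LinearMap.mem_ker] at hxf
  have hl0 : l.mapRange (f.baseChange ℂ) (map_zero _) = 0 := by
    refine h₂.eq_zero_of_sum_eq_zero _ (fun ab => hf.map_Ipq_le ab.1 ab.2 ⟨l ab, hlI ab, rfl⟩) ?_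
    rw [Finsupp.sum_mapRange_index (fun _ => rfl), ← map_finsuppSum, hlsum, hxf]
  refine ⟨l, fun ab => Submodule.mem_inf.2 ⟨hlI ab, ?_⟩, hlP, hlsum⟩
  rw [← ker_baseChange, LinearMap.mem_ker]
  simpa using DFunLike.congr_fun hl0 ab

lemma strict_ker (h : IsRMHS W F) (h₂ : IsRMHS W₂ F₂) (n r : ℤ) :
    ((F r ⊓ cx V (W n)) ⊔ cx V (W (n - 1))) ⊓ cx V (LinearMap.ker f) ≤
      (F r ⊓ cx V (LinearMap.ker f ⊓ W n)) ⊔ cx V (LinearMap.ker f ⊓ W (n - 1)) := by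
  rintro x ⟨hx, hxf⟩
  rw [h.F_inf_cx_eq_supIpq, h.cx_eq_supIpq, ← supIpq_or] at hx
  obtain ⟨l, hl, hlP, rfl⟩ := hf.exists_finsupp_Ipq_ker h₂ hx hxf
  refine Submodule.sum_mem _ fun ab hab => ?_
  have hlK : ∀ m, ab.1 + ab.2 ≤ m → l ab ∈ cx V (LinearMap.ker f ⊓ W m) :=
    fun _ hm => h.Ipq_inf_cx_le hm (hl ab)
  rcases not_not.1 fun hP => Finsupp.mem_support_iff.1 hab (hlP ab hP) with ⟨hr, hn⟩ | hlow
  · exact Submodule.mem_sup_left ⟨(h.Ipq_le_F_inf_cx hr hn (hl ab).1).1, hlK n hn⟩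
  · exact Submodule.mem_sup_right (hlK _ hlow)

lemma cx_ker_inf_le (h : IsRMHS W F) (h₂ : IsRMHS W₂ F₂) (n p : ℤ) :
    cx V (LinearMap.ker f ⊓ W n) ≤ (F p ⊓ cx V (LinearMap.ker f ⊓ W n)) ⊔
      (((F (n + 1 - p)).map (conjC V) ⊓ cx V (LinearMap.ker f ⊓ W n)) ⊔
        cx V (LinearMap.ker f ⊓ W (n - 1))) := by
  intro x hx
  have hxW : x ∈ supIpq W F (fun ab => ab.1 + ab.2 ≤ n) := by
    rw [← h.cx_eq_supIpq]
    exact cx_mono inf_le_right hx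
  obtain ⟨l, hl, hlP, rfl⟩ := hf.exists_finsupp_Ipq_ker h₂ hxW (cx_mono inf_le_left hx)
  refine Submodule.sum_mem _ fun ab hab => ?_
  have hn : ab.1 + ab.2 ≤ n := not_not.1 fun hn => Finsupp.mem_support_iff.1 hab (hlP ab hn)
  have hlK : ∀ m, ab.1 + ab.2 ≤ m → l ab ∈ cx V (LinearMap.ker f ⊓ W m) :=
    fun _ hm => h.Ipq_inf_cx_le hm (hl ab)
  rcases le_or_gt p ab.1 with hp | hp
  · exact Submodule.mem_sup_left ⟨(h.Ipq_le_F_inf_cx hp hn (hl ab).1).1, hlK n hn⟩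
  rcases le_or_gt (ab.1 + ab.2) (n - 1) with hlow | hw
  · exact Submodule.mem_sup_right (Submodule.mem_sup_right (hlK _ hlow))
  have hconj := h.Ipq_le_conjF_sup (r := n + 1 - p) (by omega) (hl ab).1
  rw [show ab.1 + ab.2 = n by omega] at hconj
  exact Submodule.mem_sup_right (hf.conj.strict_ker h.conj h₂.conj n (n + 1 - p) ⟨hconj, (hl ab).2⟩)

end IsMorphism

end Morphisms

section Restriction

variable {V : Type*} [AddCommGroup V] [Module ℝ V] (K : Submodule ℝ V)

lemma range_baseChange_subtype : LinearMap.range (K.subtype.baseChange ℂ) = cx V K := by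
  rw [LinearMap.range_eq_map, ← cx_top, map_baseChange_cx, Submodule.map_subtype_top]

lemma map_baseChange_subtype_comap (S : Submodule ℂ (ℂ ⊗[ℝ] V)) :
    (S.comap (K.subtype.baseChange ℂ)).map (K.subtype.baseChange ℂ) = cx V K ⊓ S := by
  rw [Submodule.map_comap_eq, range_baseChange_subtype]

lemma map_baseChange_subtype_cx_comap (A : Submodule ℝ V) :
    (cx K (A.comap K.subtype)).map (K.subtype.baseChange ℂ) = cx V (K ⊓ A) := by
  rw [map_baseChange_cx, Submodule.map_comap_subtype]

lemma map_baseChange_subtype_comap_inf (S : Submodule ℂ (ℂ ⊗[ℝ] V)) :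
    ((S ⊓ cx V K).comap (K.subtype.baseChange ℂ)).map (K.subtype.baseChange ℂ) = S ⊓ cx V K := by
  rw [map_baseChange_subtype_comap, inf_eq_right.2 inf_le_right]

lemma map_baseChange_subtype_conjC_comap_inf (S : Submodule ℂ (ℂ ⊗[ℝ] V)) :
    (((S ⊓ cx V K).comap (K.subtype.baseChange ℂ)).map (conjC K)).map (K.subtype.baseChange ℂ) =
      S.map (conjC V) ⊓ cx V K := by
  rw [map_conjC_comap_baseChange, map_baseChange_subtype_comap, map_conjC_inf, map_conjC_cx,
    inf_eq_right.2 inf_le_right]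

variable {W : ℤ → Submodule ℝ V} {F : ℤ → Submodule ℂ (ℂ ⊗[ℝ] V)}

lemma IsRMHS.comap_subtype (h : IsRMHS W F)
    (hsup : ∀ n p, cx V (K ⊓ W n) ≤ (F p ⊓ cx V (K ⊓ W n)) ⊔
      (((F (n + 1 - p)).map (conjC V) ⊓ cx V (K ⊓ W n)) ⊔ cx V (K ⊓ W (n - 1)))) :
    IsRMHS (fun i => (W i).comap K.subtype)
      (fun p => (F p ⊓ cx V K).comap (K.subtype.baseChange ℂ)) := by
  have hj : Function.Injective (K.subtype.baseChange ℂ) :=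
    baseChange_injective K.injective_subtype
  have hKW : ∀ n, cx V (K ⊓ W n) ≤ cx V K := fun n => cx_mono inf_le_left
  have hinf : ∀ S n, S ⊓ cx V K ⊓ cx V (K ⊓ W n) = S ⊓ cx V (K ⊓ W n) := fun S n => by
    rw [inf_assoc, inf_eq_right.2 (hKW n)]
  refine
    { monoW := fun _ _ hij => Submodule.comap_mono (h.monoW hij)
      antiF := fun _ _ hpq => Submodule.comap_mono (inf_le_inf_right _ (h.antiF hpq))
      w_bot := ?_
      w_top := ?_
      f_top := ?_
      f_bot := ?_
      gr_inf := fun n p => Submodule.map_injective_of_injective hj ?_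
      gr_sup := fun n p => Submodule.map_injective_of_injective hj ?_ }
  · obtain ⟨a, ha⟩ := h.w_bot
    exact ⟨a, fun i hi => by rw [ha i hi, Submodule.comap_bot, Submodule.ker_subtype]⟩
  · obtain ⟨b, hb⟩ := h.w_top
    exact ⟨b, fun i hi => by rw [hb i hi, Submodule.comap_top]⟩
  · obtain ⟨a, ha⟩ := h.f_top
    refine ⟨a, fun p hp => eq_top_iff.2 fun x _ => ?_⟩
    rw [ha p hp, top_inf_eq, Submodule.mem_comap, ← range_baseChange_subtype]
    exact LinearMap.mem_range_self _ x
  · obtain ⟨b, hb⟩ := h.f_bot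
    exact ⟨b, fun p hp => by
      rw [hb p hp, bot_inf_eq, Submodule.comap_bot, LinearMap.ker_eq_bot.2 hj]⟩
  · simp only [Submodule.map_sup, Submodule.map_inf _ hj, map_baseChange_subtype_cx_comap,
      map_baseChange_subtype_comap_inf, map_baseChange_subtype_conjC_comap_inf, hinf]
    refine le_antisymm ((le_inf ?_ ?_).trans (cx_inf K (W (n - 1))).ge)
      (le_inf le_sup_right le_sup_right)
    · exact inf_le_left.trans (sup_le (inf_le_right.trans (hKW n)) (hKW _))
    have hle : ∀ S : Submodule ℂ (ℂ ⊗[ℝ] V), S ⊓ cx V (K ⊓ W n) ⊔ cx V (K ⊓ W (n - 1)) ≤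
        S ⊓ cx V (W n) ⊔ cx V (W (n - 1)) := fun S =>
      sup_le_sup (inf_le_inf_left _ (cx_mono inf_le_right)) (cx_mono inf_le_right)
    exact (inf_le_inf (hle _) (hle _)).trans (h.gr_inf n p).le
  · simp only [Submodule.map_sup, Submodule.map_inf _ hj, map_baseChange_subtype_cx_comap,
      map_baseChange_subtype_comap_inf, map_baseChange_subtype_conjC_comap_inf, hinf]
    refine le_antisymm (sup_le inf_le_right (sup_le inf_le_right ?_)) (hsup n p)
    exact cx_mono (inf_le_inf_left _ (h.monoW (by omega)))

end Restriction

end MHS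

theorem kernel_is_RMHS_general
    (V V' : Type*) [AddCommGroup V] [Module ℝ V]
    [AddCommGroup V'] [Module ℝ V']
    (W : ℤ → Submodule ℝ V) (F : ℤ → Submodule ℂ (ℂ ⊗[ℝ] V))
    (W' : ℤ → Submodule ℝ V') (F' : ℤ → Submodule ℂ (ℂ ⊗[ℝ] V'))
    (h : MHS.IsRMHS W F) (h' : MHS.IsRMHS W' F')
    (f : V →ₗ[ℝ] V')
    (hfW : ∀ i : ℤ, (W i).map f ≤ W' i)
    (hfF : ∀ p : ℤ, (F p).map (f.baseChange ℂ) ≤ F' p) :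
    MHS.IsRMHS (V := ↥(LinearMap.ker f))
      (fun i => (W i).comap (LinearMap.ker f).subtype)
      (fun p => (F p ⊓ LinearMap.ker (f.baseChange ℂ)).comap
        (((LinearMap.ker f).subtype).baseChange ℂ)) := by
  rw [MHS.ker_baseChange]
  exact h.comap_subtype _ (MHS.IsMorphism.cx_ker_inf_le ⟨hfW, hfF⟩ h h')

/-- The kernel of a morphism of `ℝ`-mixed Hodge structures,
with the filtrations `W_i(K) = W_i ∩ K` and `F^p(K_ℂ) = F^p ∩ ker f_ℂ`
(transported along the identification of `K_ℂ = ℂ ⊗ K` with `ker f_ℂ ⊆ V_ℂ`),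
is an `ℝ`-mixed Hodge structure on `K = ker f`. -/
theorem kernel_is_RMHS
    (V V' : Type*) [AddCommGroup V] [Module ℝ V] [FiniteDimensional ℝ V]
    [AddCommGroup V'] [Module ℝ V'] [FiniteDimensional ℝ V']
    (W : ℤ → Submodule ℝ V) (F : ℤ → Submodule ℂ (ℂ ⊗[ℝ] V))
    (W' : ℤ → Submodule ℝ V') (F' : ℤ → Submodule ℂ (ℂ ⊗[ℝ] V'))
    (h : MHS.IsRMHS W F) (h' : MHS.IsRMHS W' F')
    (f : V →ₗ[ℝ] V')
    (hfW : ∀ i : ℤ, (W i).map f ≤ W' i)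
    (hfF : ∀ p : ℤ, (F p).map (f.baseChange ℂ) ≤ F' p) :
    MHS.IsRMHS (V := ↥(LinearMap.ker f))
      (fun i => (W i).comap (LinearMap.ker f).subtype)
      (fun p => (F p ⊓ LinearMap.ker (f.baseChange ℂ)).comap
        (((LinearMap.ker f).subtype).baseChange ℂ)) :=
  kernel_is_RMHS_general V V' W F W' F' h h' f hfW hfF
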